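/- Let Σ be a p×p real symmetric positive definite matrix, μ ∈ ℝ^p, e ∈ ℝ^p the all-ones vector, r_f ∈ ℝ, and set A = μᵀΣ⁻¹μ, B = μᵀΣ⁻¹e, C = eᵀΣ⁻¹e. Then for every w ∈ ℝ^p with eᵀw = 1, one has (wᵀμ − r_f)² ≤ (A − 2B·r_f + C·r_f²)·(wᵀΣw). Moreover, if B − C·r_f ≠ 0, equality holds for the market portfolio w_mkt = Σ⁻¹(μ − r_f·e)/(B − C·r_f); in particular, if additionally A − 2B·r_f + C·r_f² > 0 and B − C·r_f > 0, the market portfolio attains the maximal Sharpe ratio √(A − 2B·r_f + C·r_f²) among all fully invested portfolios. -/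

import Mathlib

/-!
With `v = μ - r_f • e` the vector of excess returns, a fully invested portfolio `w` has excess
return `w ⬝ᵥ v`, and `A - 2 B r_f + C r_f² = vᵀ Σ⁻¹ v`. Cauchy–Schwarz for the inner product
given by `Σ`, applied to `w` and `Σ⁻¹ v`, gives `(w ⬝ᵥ v)² ≤ (vᵀ Σ⁻¹ v) (wᵀ Σ w)`, with equality
for every multiple of `Σ⁻¹ v`. The normalising constant `B - C r_f = eᵀ Σ⁻¹ v` makes
the market portfolio fully invested.
-/

open Matrix

namespace Matrix

variable {n : Type*} [Fintype n]

theorem IsSymm.dotProduct_mulVec_comm {R : Type*} [CommSemiring R] {M : Matrix n n R}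
    (hM : M.IsSymm) (x y : n → R) : x ⬝ᵥ (M *ᵥ y) = y ⬝ᵥ (M *ᵥ x) := by
  rw [dotProduct_mulVec, ← mulVec_transpose, hM.eq, dotProduct_comm]

theorem IsSymm.dotProduct_mulVec_sub_smul {R : Type*} [CommRing R] {M : Matrix n n R}
    (hM : M.IsSymm) (x e : n → R) (r : R) :
    (x - r • e) ⬝ᵥ (M *ᵥ (x - r • e)) =
      x ⬝ᵥ (M *ᵥ x) - 2 * (x ⬝ᵥ (M *ᵥ e)) * r + (e ⬝ᵥ (M *ᵥ e)) * r ^ 2 := by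
  simp only [mulVec_sub, mulVec_smul, sub_dotProduct, dotProduct_sub, dotProduct_smul,
    smul_dotProduct, smul_eq_mul, hM.dotProduct_mulVec_comm e x]
  ring

theorem PosSemidef.sq_dotProduct_mulVec_le {M : Matrix n n ℝ} (hM : M.PosSemidef)
    (x y : n → ℝ) : (x ⬝ᵥ (M *ᵥ y)) ^ 2 ≤ (x ⬝ᵥ (M *ᵥ x)) * (y ⬝ᵥ (M *ᵥ y)) := by
  let := M.toSeminormedAddCommGroup hM
  let := M.toInnerProductSpace hM
  have h := real_inner_mul_inner_self_le x y
  change (M *ᵥ y) ⬝ᵥ star x * ((M *ᵥ y) ⬝ᵥ star x) ≤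
    (M *ᵥ x) ⬝ᵥ star x * ((M *ᵥ y) ⬝ᵥ star y) at h
  simpa only [star_trivial, dotProduct_comm _ x, dotProduct_comm _ y, sq] using h

variable [DecidableEq n] {S : Matrix n n ℝ}

theorem mulVec_nonsing_inv_mulVec (hS : IsUnit S.det) (v : n → ℝ) : S *ᵥ (S⁻¹ *ᵥ v) = v := by
  rw [mulVec_mulVec, mul_nonsing_inv _ hS, one_mulVec]

theorem PosDef.sq_dotProduct_le (hS : S.PosDef) (w v : n → ℝ) :
    (w ⬝ᵥ v) ^ 2 ≤ (v ⬝ᵥ (S⁻¹ *ᵥ v)) * (w ⬝ᵥ (S *ᵥ w)) := by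
  have hS' : IsUnit S.det := (isUnit_iff_isUnit_det S).mp hS.isUnit
  have := hS.posSemidef.sq_dotProduct_mulVec_le w (S⁻¹ *ᵥ v)
  rwa [mulVec_nonsing_inv_mulVec hS', dotProduct_comm (S⁻¹ *ᵥ v), mul_comm] at this

theorem smul_nonsing_inv_mulVec_dotProduct_mulVec (hS : IsUnit S.det) (v : n → ℝ) (t : ℝ) :
    (t • (S⁻¹ *ᵥ v)) ⬝ᵥ (S *ᵥ (t • (S⁻¹ *ᵥ v))) = t ^ 2 * (v ⬝ᵥ (S⁻¹ *ᵥ v)) := by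
  rw [mulVec_smul, mulVec_nonsing_inv_mulVec hS, smul_dotProduct, dotProduct_smul,
    dotProduct_comm, smul_eq_mul, smul_eq_mul]
  ring

end Matrix

theorem div_sqrt_le_sqrt_of_sq_le_mul {x D q : ℝ} (hq : 0 < q) (h : x ^ 2 ≤ D * q) :
    x / √q ≤ √D := by
  rw [div_le_iff₀ (Real.sqrt_pos.2 hq), ← Real.sqrt_mul' _ hq.le]
  exact Real.le_sqrt_of_sq_le h

theorem div_sqrt_eq_sqrt_of_sq_eq_mul {x D q : ℝ} (hx : 0 ≤ x) (hq : 0 < q) (h : x ^ 2 = D * q) :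
    x / √q = √D := by
  rw [div_eq_iff (Real.sqrt_pos.2 hq).ne', ← Real.sqrt_mul' _ hq.le, ← h, Real.sqrt_sq hx]

theorem sharpe_ratio_bound_general {p : ℕ}
    (S : Matrix (Fin p) (Fin p) ℝ) (hS : S.PosDef)
    (μ e : Fin p → ℝ)
    (rf A B C : ℝ)
    (hA : A = μ ⬝ᵥ (S⁻¹ *ᵥ μ))
    (hB : B = μ ⬝ᵥ (S⁻¹ *ᵥ e))
    (hC : C = e ⬝ᵥ (S⁻¹ *ᵥ e)) :
    (∀ w : Fin p → ℝ, e ⬝ᵥ w = 1 →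
      (w ⬝ᵥ μ - rf) ^ 2 ≤ (A - 2 * B * rf + C * rf ^ 2) * (w ⬝ᵥ (S *ᵥ w))) ∧
    (B - C * rf ≠ 0 →
      ∀ wmkt : Fin p → ℝ, wmkt = (B - C * rf)⁻¹ • (S⁻¹ *ᵥ (μ - rf • e)) →
        (wmkt ⬝ᵥ μ - rf) ^ 2 = (A - 2 * B * rf + C * rf ^ 2) * (wmkt ⬝ᵥ (S *ᵥ wmkt))) ∧
    (B - C * rf > 0 → A - 2 * B * rf + C * rf ^ 2 > 0 →
      ∀ wmkt : Fin p → ℝ, wmkt = (B - C * rf)⁻¹ • (S⁻¹ *ᵥ (μ - rf • e)) →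
        (wmkt ⬝ᵥ μ - rf) / Real.sqrt (wmkt ⬝ᵥ (S *ᵥ wmkt)) =
          Real.sqrt (A - 2 * B * rf + C * rf ^ 2) ∧
        ∀ w : Fin p → ℝ, e ⬝ᵥ w = 1 → 0 < w ⬝ᵥ (S *ᵥ w) →
          (w ⬝ᵥ μ - rf) / Real.sqrt (w ⬝ᵥ (S *ᵥ w)) ≤
            Real.sqrt (A - 2 * B * rf + C * rf ^ 2)) := by
  have hSdet : IsUnit S.det := (isUnit_iff_isUnit_det S).mp hS.isUnit
  have hSinv : S⁻¹.IsSymm := hS.inv.isHermitian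
  set v := μ - rf • e
  set D := A - 2 * B * rf + C * rf ^ 2
  set c := B - C * rf
  have hD : v ⬝ᵥ (S⁻¹ *ᵥ v) = D := by
    rw [hSinv.dotProduct_mulVec_sub_smul, ← hA, ← hB, ← hC]
  have hc : e ⬝ᵥ (S⁻¹ *ᵥ v) = c := by
    rw [hSinv.dotProduct_mulVec_comm, sub_dotProduct, smul_dotProduct, smul_eq_mul, ← hB, ← hC,
      mul_comm rf]
  have hexcess : ∀ w, e ⬝ᵥ w = 1 → w ⬝ᵥ v = w ⬝ᵥ μ - rf := by
    intro w hw
    rw [dotProduct_sub, dotProduct_smul, dotProduct_comm w e, hw, smul_eq_mul, mul_one]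
  have hbound : ∀ w, e ⬝ᵥ w = 1 → (w ⬝ᵥ μ - rf) ^ 2 ≤ D * (w ⬝ᵥ (S *ᵥ w)) := by
    intro w hw
    rw [← hexcess w hw, ← hD]
    exact hS.sq_dotProduct_le w v
  have hmkt : ∀ wmkt, wmkt = c⁻¹ • (S⁻¹ *ᵥ v) → c ≠ 0 →
      wmkt ⬝ᵥ μ - rf = c⁻¹ * D ∧ wmkt ⬝ᵥ (S *ᵥ wmkt) = c⁻¹ ^ 2 * D := by
    rintro _ rfl hc0
    have hinvested : e ⬝ᵥ (c⁻¹ • (S⁻¹ *ᵥ v)) = 1 := by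
      rw [dotProduct_smul, hc, smul_eq_mul, inv_mul_cancel₀ hc0]
    rw [← hexcess _ hinvested, smul_nonsing_inv_mulVec_dotProduct_mulVec hSdet, hD,
      smul_dotProduct, dotProduct_comm, hD, smul_eq_mul]
    exact ⟨rfl, rfl⟩
  refine ⟨hbound, fun hc0 wmkt hwmkt => ?_, fun hcpos hDpos wmkt hwmkt => ⟨?_, fun w hw hq => ?_⟩⟩
  · obtain ⟨hexcess_mkt, hvar_mkt⟩ := hmkt wmkt hwmkt hc0
    rw [hexcess_mkt, hvar_mkt]
    ring
  · obtain ⟨hexcess_mkt, hvar_mkt⟩ := hmkt wmkt hwmkt hcpos.ne'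
    rw [hexcess_mkt, hvar_mkt]
    exact div_sqrt_eq_sqrt_of_sq_eq_mul (by positivity) (by positivity) (by ring)
  · exact div_sqrt_le_sqrt_of_sq_le_mul hq (hbound w hw)

/-- Sharpe-ratio bound for fully invested portfolios, with equality for the
market (tangency) portfolio, which attains the maximal Sharpe ratio
`√(A − 2B·r_f + C·r_f²)`. -/
theorem sharpe_ratio_bound {p : ℕ}
    (S : Matrix (Fin p) (Fin p) ℝ) (hS : S.PosDef)
    (μ e : Fin p → ℝ) (he : e = fun _ => (1 : ℝ))
    (rf A B C : ℝ)
    (hA : A = μ ⬝ᵥ (S⁻¹ *ᵥ μ))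
    (hB : B = μ ⬝ᵥ (S⁻¹ *ᵥ e))
    (hC : C = e ⬝ᵥ (S⁻¹ *ᵥ e)) :
    (∀ w : Fin p → ℝ, e ⬝ᵥ w = 1 →
      (w ⬝ᵥ μ - rf) ^ 2 ≤ (A - 2 * B * rf + C * rf ^ 2) * (w ⬝ᵥ (S *ᵥ w))) ∧
    (B - C * rf ≠ 0 →
      ∀ wmkt : Fin p → ℝ, wmkt = (B - C * rf)⁻¹ • (S⁻¹ *ᵥ (μ - rf • e)) →
        (wmkt ⬝ᵥ μ - rf) ^ 2 = (A - 2 * B * rf + C * rf ^ 2) * (wmkt ⬝ᵥ (S *ᵥ wmkt))) ∧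
    (B - C * rf > 0 → A - 2 * B * rf + C * rf ^ 2 > 0 →
      ∀ wmkt : Fin p → ℝ, wmkt = (B - C * rf)⁻¹ • (S⁻¹ *ᵥ (μ - rf • e)) →
        (wmkt ⬝ᵥ μ - rf) / Real.sqrt (wmkt ⬝ᵥ (S *ᵥ wmkt)) =
          Real.sqrt (A - 2 * B * rf + C * rf ^ 2) ∧
        ∀ w : Fin p → ℝ, e ⬝ᵥ w = 1 → 0 < w ⬝ᵥ (S *ᵥ w) →
          (w ⬝ᵥ μ - rf) / Real.sqrt (w ⬝ᵥ (S *ᵥ w)) ≤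
            Real.sqrt (A - 2 * B * rf + C * rf ^ 2)) :=
  sharpe_ratio_bound_general S hS μ e rf A B C hA hB hC
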